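/- For the scalar mean-field one-controller case (n = m = 1, h = 0): with state recursion x(τ+1) = (a + ω(τ)c)x(τ) + (ā + ω(τ)c̄)Ex(τ) + (b + ω(τ)d)v(τ) + (b̄ + ω(τ)d̄)Ev(τ), cost J = Σ_{τ=0}^{Γ} (E[qx(τ)²] + q̄(Ex(τ))² + E[rv(τ)²] + r̄(Ev(τ))²) + E[φ x(Γ+1)²] + φ̄ (Ex(Γ+1))², with q ≥ 0, q+q̄ ≥ 0, r > 0, r+r̄ > 0, φ ≥ 0, φ+φ̄ ≥ 0, the backward Riccati recursions Ῡ(τ) = r + φ(τ+1)b² + σ²φ(τ+1)d², Υ(τ) = r + r̄ + (φ(τ+1)+φ̄(τ+1))(b+b̄)² + σ²φ(τ+1)(d+d̄)², φ(τ) = q + φ(τ+1)a² + σ²φ(τ+1)c² − (φ(τ+1)ab + σ²φ(τ+1)cd)²/Ῡ(τ), define Ῡ(τ) > 0 and Υ(τ) > 0 for all 0 ≤ τ ≤ Γ, and φ(τ) ≥ 0 for all τ. -/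
import Mathlib

lemma riccati_key (P Q R σ2 A B C D q : ℝ)
    (hP : 0 ≤ P) (hQ : 0 ≤ Q) (hR : 0 < R) (hσ : 0 ≤ σ2) (hq : 0 ≤ q) :
    0 ≤ q + P * A ^ 2 + σ2 * Q * C ^ 2
      - (P * A * B + σ2 * Q * C * D) ^ 2 / (R + P * B ^ 2 + σ2 * Q * D ^ 2) := by
  have hden : 0 < R + P * B ^ 2 + σ2 * Q * D ^ 2 := by positivity
  have hnum : (P * A * B + σ2 * Q * C * D) ^ 2
      ≤ (P * A ^ 2 + σ2 * Q * C ^ 2) * (R + P * B ^ 2 + σ2 * Q * D ^ 2) := by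
    nlinarith [mul_nonneg (mul_nonneg hσ (mul_nonneg hP hQ)) (sq_nonneg (A * D - C * B)),
      mul_nonneg (mul_nonneg hR.le hP) (sq_nonneg A),
      mul_nonneg (mul_nonneg (mul_nonneg hR.le hσ) hQ) (sq_nonneg C)]
  have := div_le_of_le_mul₀ ?_ ?_ hnum
  · linarith [this]
  · positivity
  · positivity

/-- Scalar mean-field one-controller Riccati recursions: under the sign conditions
`q ≥ 0, q+q̄ ≥ 0, r > 0, r+r̄ > 0, φ(Γ+1) ≥ 0, φ(Γ+1)+φ̄(Γ+1) ≥ 0, σ² ≥ 0`, the backward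
recursions define `Ῡ(τ) > 0`, `Υ(τ) > 0` for all `0 ≤ τ ≤ Γ` and `φ(τ) ≥ 0` for all `τ`. -/
theorem scalar_riccati_positivity
    (Γ : ℕ) (a abar b bbar c cbar d dbar q qbar r rbar σ2 : ℝ)
    (hq : 0 ≤ q) (hqq : 0 ≤ q + qbar) (hr : 0 < r) (hrr : 0 < r + rbar) (hσ : 0 ≤ σ2)
    (phi phibar Ubar U : ℕ → ℝ)
    (hφT : 0 ≤ phi (Γ + 1)) (hφφT : 0 ≤ phi (Γ + 1) + phibar (Γ + 1))
    (hUbar : ∀ τ ≤ Γ, Ubar τ = r + phi (τ + 1) * b ^ 2 + σ2 * phi (τ + 1) * d ^ 2)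
    (hU : ∀ τ ≤ Γ, U τ = r + rbar + (phi (τ + 1) + phibar (τ + 1)) * (b + bbar) ^ 2
        + σ2 * phi (τ + 1) * (d + dbar) ^ 2)
    (hphi : ∀ τ ≤ Γ, phi τ = q + phi (τ + 1) * a ^ 2 + σ2 * phi (τ + 1) * c ^ 2
        - (phi (τ + 1) * a * b + σ2 * phi (τ + 1) * c * d) ^ 2 / Ubar τ)
    (hphibar : ∀ τ ≤ Γ, phi τ + phibar τ = q + qbar
        + (phi (τ + 1) + phibar (τ + 1)) * (a + abar) ^ 2
        + σ2 * phi (τ + 1) * (c + cbar) ^ 2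
        - ((phi (τ + 1) + phibar (τ + 1)) * (a + abar) * (b + bbar)
            + σ2 * phi (τ + 1) * (c + cbar) * (d + dbar)) ^ 2 / U τ) :
    (∀ τ ≤ Γ, 0 < Ubar τ ∧ 0 < U τ) ∧ (∀ τ ≤ Γ + 1, 0 ≤ phi τ) := by
  -- backward induction, indexed by the distance k from the terminal time Γ+1
  have main : ∀ k ≤ Γ + 1, 0 ≤ phi (Γ + 1 - k) ∧
      0 ≤ phi (Γ + 1 - k) + phibar (Γ + 1 - k) := by
    intro k hk
    induction k with
    | zero => simpa using ⟨hφT, hφφT⟩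
    | succ k ih =>
      have hk' : k ≤ Γ + 1 := Nat.le_of_succ_le hk
      obtain ⟨h1, h2⟩ := ih hk'
      set τ := Γ + 1 - (k + 1) with hτdef
      have hτ : τ ≤ Γ := by omega
      have hτ1 : τ + 1 = Γ + 1 - k := by omega
      rw [← hτ1] at h1 h2
      constructor
      · rw [hphi τ hτ, hUbar τ hτ]
        exact riccati_key (phi (τ+1)) (phi (τ+1)) r σ2 a b c d q h1 h1 hr hσ hq
      · rw [hphibar τ hτ, hU τ hτ]
        exact riccati_key (phi (τ+1) + phibar (τ+1)) (phi (τ+1)) (r + rbar) σ2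
          (a + abar) (b + bbar) (c + cbar) (d + dbar) (q + qbar) h2 h1 hrr hσ hqq
  have main' : ∀ τ ≤ Γ + 1, 0 ≤ phi τ ∧ 0 ≤ phi τ + phibar τ := by
    intro τ hτ
    have := main (Γ + 1 - τ) (by omega)
    have heq : Γ + 1 - (Γ + 1 - τ) = τ := by omega
    rwa [heq] at this
  refine ⟨fun τ hτ => ?_, fun τ hτ => (main' τ hτ).1⟩
  obtain ⟨h1, h2⟩ := main' (τ + 1) (by omega)
  constructor
  · rw [hUbar τ hτ]; positivity
  · rw [hU τ hτ]; positivity
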